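/- For all positive integers j, k, n, r: NCN_{j,k}(n+1, r) = Σ_{i=0}^{n} C(n, i) · ENCN_{j,k}(i, r), where NCN_{j,k}(m, r) is the number of r-colored j-noncrossing k-nonnesting partitions of [m] and ENCN_{j,k}(i, r) is the number of r-colored enhanced partitions of [i] with enhanced crossing number < j and enhanced nesting number < k. -/

import Mathlib

/-!
Lowering the right end of every arc by one turns the arcs `(a, b)`, `a < b`, of a partition of
`[n + 1]` into pairs `(a, b - 1)` with `a ≤ b - 1` in `[n]`, and no two pairs share a first or a
second coordinate. On the set `V ⊆ [n]` of points occurring in these pairs, relabelled as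
`[#V]`, they are exactly the enhanced arcs of a unique enhanced partition: a pair `(v, v)`
becomes the loop of an isolated point. Every enhanced partition of `[#V]` arises this way, so
colored partitions of `[n + 1]` correspond to pairs `(V, Γ)` with `Γ` a colored enhanced partition
of `[#V]`. An inequality `i < j` between a left and a right end becomes `i ≤ j - 1`, so
`k`-crossings and `k`-nestings correspond to enhanced ones, and there are `C(n, i)` sets `V` of
size `i`.
-/

open Finset

/-- `IsArc P i j` : `(i,j)` is an arc of the set partition `P`. -/
def IsArc {n : ℕ} (P : Finpartition (Finset.univ : Finset (Fin n))) (i j : Fin n) : Prop :=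
  i < j ∧ ∃ B ∈ P.parts, i ∈ B ∧ j ∈ B ∧ ∀ k ∈ B, i < k → j ≤ k

/-- The set of minimal elements of blocks of `P`. -/
def blockMin {n : ℕ} (P : Finpartition (Finset.univ : Finset (Fin n))) : Set (Fin n) :=
  {i | ∃ B ∈ P.parts, i ∈ B ∧ ∀ k ∈ B, i ≤ k}

/-- The set of maximal elements of blocks of `P`. -/
def blockMax {n : ℕ} (P : Finpartition (Finset.univ : Finset (Fin n))) : Set (Fin n) :=
  {i | ∃ B ∈ P.parts, i ∈ B ∧ ∀ k ∈ B, k ≤ i}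

/-- An `r`-colored partition of `[n]`. -/
structure ColoredPartition (n r : ℕ) where
  P : Finpartition (Finset.univ : Finset (Fin n))
  color : ∀ i j : Fin n, IsArc P i j → Fin r

/-- `Λ` has a `k`-crossing: `k` same-colored arcs with
`i₁ < ⋯ < i_k < j₁ < ⋯ < j_k`. -/
def HasCrossing {n r : ℕ} (Λ : ColoredPartition n r) (k : ℕ) : Prop :=
  ∃ (f g : Fin k → Fin n) (c : Fin r),
    StrictMono f ∧ StrictMono g ∧ (∀ s t : Fin k, f s < g t) ∧
    ∀ t, ∃ h : IsArc Λ.P (f t) (g t), Λ.color (f t) (g t) h = c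

/-- `Λ` has a `k`-nesting: `k` same-colored arcs with
`i₁ < ⋯ < i_k < j_k < ⋯ < j₁`. -/
def HasNesting {n r : ℕ} (Λ : ColoredPartition n r) (k : ℕ) : Prop :=
  ∃ (f g : Fin k → Fin n) (c : Fin r),
    StrictMono f ∧ StrictAnti g ∧ (∀ s t : Fin k, f s < g t) ∧
    ∀ t, ∃ h : IsArc Λ.P (f t) (g t), Λ.color (f t) (g t) h = c

/-- Uncolored `k`-crossing. -/
def HasCrossingP {n : ℕ} (P : Finpartition (Finset.univ : Finset (Fin n))) (k : ℕ) : Prop :=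
  ∃ f g : Fin k → Fin n, StrictMono f ∧ StrictMono g ∧ (∀ s t : Fin k, f s < g t) ∧
    ∀ t, IsArc P (f t) (g t)

/-- Uncolored `k`-nesting. -/
def HasNestingP {n : ℕ} (P : Finpartition (Finset.univ : Finset (Fin n))) (k : ℕ) : Prop :=
  ∃ f g : Fin k → Fin n, StrictMono f ∧ StrictAnti g ∧ (∀ s t : Fin k, f s < g t) ∧
    ∀ t, IsArc P (f t) (g t)

/-- The crossing number of a colored partition: the largest `k` with a `k`-crossing. -/
noncomputable def crNum {n r : ℕ} (Λ : ColoredPartition n r) : ℕ :=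
  sSup {k | 0 < k ∧ HasCrossing Λ k}

noncomputable def neNum {n r : ℕ} (Λ : ColoredPartition n r) : ℕ :=
  sSup {k | 0 < k ∧ HasNesting Λ k}

noncomputable def crNumP {n : ℕ} (P : Finpartition (Finset.univ : Finset (Fin n))) : ℕ :=
  sSup {k | 0 < k ∧ HasCrossingP P k}

noncomputable def neNumP {n : ℕ} (P : Finpartition (Finset.univ : Finset (Fin n))) : ℕ :=
  sSup {k | 0 < k ∧ HasNestingP P k}

/-- A matching: all blocks have at most two elements. -/
def IsMatching {m : ℕ} (P : Finpartition (Finset.univ : Finset (Fin m))) : Prop :=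
  ∀ B ∈ P.parts, B.card ≤ 2

/-- A complete matching: all blocks have exactly two elements. -/
def IsCompleteMatching {m : ℕ} (P : Finpartition (Finset.univ : Finset (Fin m))) : Prop :=
  ∀ B ∈ P.parts, B.card = 2

/-- `i ∈ [n] ↦ 2i ∈ [2n]` (0-based: the element of 1-based value `2(i+1)-1`). -/
def dbl {n : ℕ} (i : Fin n) : Fin (2 * n) := ⟨2 * i.1, by have := i.2; omega⟩

/-- `i ∈ [n] ↦` 0-based index `2i+1` of `[2n]` (1-based value `2(i+1)`). -/
def dbl1 {n : ℕ} (i : Fin n) : Fin (2 * n) := ⟨2 * i.1 + 1, by have := i.2; omega⟩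

/-- Enhanced arcs: arcs of `P` together with loops `(i,i)` at isolated points. -/
def EnhIsArc {n : ℕ} (P : Finpartition (Finset.univ : Finset (Fin n))) (i j : Fin n) : Prop :=
  IsArc P i j ∨ (i = j ∧ i ∈ blockMin P ∧ i ∈ blockMax P)

/-- An `r`-colored enhanced partition of `[n]`. -/
structure EnhColoredPartition (n r : ℕ) where
  P : Finpartition (Finset.univ : Finset (Fin n))
  color : ∀ i j : Fin n, EnhIsArc P i j → Fin r

/-- Enhanced `k`-crossing: same-colored enhanced arcs with
`i₁ < ⋯ < i_k ≤ j₁ < ⋯ < j_k`. -/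
def HasEnhCrossing {n r : ℕ} (Λ : EnhColoredPartition n r) (k : ℕ) : Prop :=
  ∃ (f g : Fin k → Fin n) (c : Fin r),
    StrictMono f ∧ StrictMono g ∧ (∀ s t : Fin k, f s ≤ g t) ∧
    ∀ t, ∃ h : EnhIsArc Λ.P (f t) (g t), Λ.color (f t) (g t) h = c

/-- Enhanced `k`-nesting: same-colored enhanced arcs with
`i₁ < ⋯ < i_k ≤ j_k < ⋯ < j₁`. -/
def HasEnhNesting {n r : ℕ} (Λ : EnhColoredPartition n r) (k : ℕ) : Prop :=
  ∃ (f g : Fin k → Fin n) (c : Fin r),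
    StrictMono f ∧ StrictAnti g ∧ (∀ s t : Fin k, f s ≤ g t) ∧
    ∀ t, ∃ h : EnhIsArc Λ.P (f t) (g t), Λ.color (f t) (g t) h = c

noncomputable def enhCrNum {n r : ℕ} (Λ : EnhColoredPartition n r) : ℕ :=
  sSup {k | 0 < k ∧ HasEnhCrossing Λ k}

noncomputable def enhNeNum {n r : ℕ} (Λ : EnhColoredPartition n r) : ℕ :=
  sSup {k | 0 < k ∧ HasEnhNesting Λ k}

/-- The `(r+1)²` steps: `±e_i` (first summand with a sign), `e_i − e_j` for `i ≠ j`,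
and `r+1` distinct zero steps. -/
def Step (r : ℕ) : Type :=
  (Fin r × Bool) ⊕ ({p : Fin r × Fin r // p.1 ≠ p.2} ⊕ Fin (r + 1))

/-- The displacement vector of a step. -/
def stepVec {r : ℕ} : Step r → Fin r → ℤ
  | Sum.inl (i, b) => fun t => if t = i then (if b then 1 else -1) else 0
  | Sum.inr (Sum.inl p) => fun t => (if t = p.1.1 then 1 else 0) - (if t = p.1.2 then 1 else 0)
  | Sum.inr (Sum.inr _) => fun _ => 0

/-- Position after the first `k` steps of a walk started at the origin. -/
def walkPos {r m : ℕ} (w : Fin m → Step r) (k : ℕ) (t : Fin r) : ℤ :=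
  ∑ i ∈ Finset.univ.filter (fun i : Fin m => i.1 < k), stepVec (w i) t

/-- The walk stays in `ℕ^r` throughout and returns to the origin. -/
def IsClosedWalk {r m : ℕ} (w : Fin m → Step r) : Prop :=
  (∀ k : ℕ, ∀ t : Fin r, 0 ≤ walkPos w k t) ∧ ∀ t : Fin r, walkPos w m t = 0

/-- An `r`-colored permutation of `[n]`. -/
structure ColoredPerm (n r : ℕ) where
  sigma : Equiv.Perm (Fin n)
  cplus : ∀ i : Fin n, i ≤ sigma i → Fin r
  cminus : ∀ i : Fin n, sigma i < i → Fin r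

/-- `k`-crossing of a colored permutation: an enhanced `k`-crossing among same-colored
upper arcs `(i, σ i)`, or an ordinary `k`-crossing among same-colored lower arcs `(σ i, i)`. -/
def PermHasCrossing {n r : ℕ} (S : ColoredPerm n r) (k : ℕ) : Prop :=
  (∃ (f : Fin k → Fin n) (c : Fin r),
      StrictMono f ∧ StrictMono (fun t => S.sigma (f t)) ∧
      (∀ s t : Fin k, f s ≤ S.sigma (f t)) ∧
      ∀ t, ∃ h : f t ≤ S.sigma (f t), S.cplus (f t) h = c) ∨
  (∃ (f : Fin k → Fin n) (c : Fin r),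
      StrictMono (fun t => S.sigma (f t)) ∧ StrictMono f ∧
      (∀ s t : Fin k, S.sigma (f s) < f t) ∧
      ∀ t, ∃ h : S.sigma (f t) < f t, S.cminus (f t) h = c)

/-- `k`-nesting of a colored permutation. -/
def PermHasNesting {n r : ℕ} (S : ColoredPerm n r) (k : ℕ) : Prop :=
  (∃ (f : Fin k → Fin n) (c : Fin r),
      StrictMono f ∧ StrictAnti (fun t => S.sigma (f t)) ∧
      (∀ s t : Fin k, f s ≤ S.sigma (f t)) ∧
      ∀ t, ∃ h : f t ≤ S.sigma (f t), S.cplus (f t) h = c) ∨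
  (∃ (f : Fin k → Fin n) (c : Fin r),
      StrictMono (fun t => S.sigma (f t)) ∧ StrictAnti f ∧
      (∀ s t : Fin k, S.sigma (f s) < f t) ∧
      ∀ t, ∃ h : S.sigma (f t) < f t, S.cminus (f t) h = c)

/-- The number of `r`-colored `j`-noncrossing `k`-nonnesting partitions of `[m]`. -/
noncomputable def NCNcount (m r j k : ℕ) : ℕ :=
  Nat.card {Λ : ColoredPartition m r // ¬HasCrossing Λ j ∧ ¬HasNesting Λ k}

/-- The number of `r`-colored enhanced partitions of `[m]` with enhanced crossing
number `< j` and enhanced nesting number `< k`. -/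
noncomputable def ENCNcount (m r j k : ℕ) : ℕ :=
  Nat.card {Λ : EnhColoredPartition m r // ¬HasEnhCrossing Λ j ∧ ¬HasEnhNesting Λ k}


open Relation

theorem OrderEmbedding.strictMono_comp_iff {α β γ : Type*} [Preorder α] [Preorder β]
    [Preorder γ] (e : β ↪o γ) {g : α → β} : StrictMono (e ∘ g) ↔ StrictMono g :=
  ⟨fun h _ _ hab => e.lt_iff_lt.1 (h hab), e.strictMono.comp⟩

theorem OrderEmbedding.strictAnti_comp_iff {α β γ : Type*} [Preorder α] [Preorder β]
    [Preorder γ] (e : β ↪o γ) {g : α → β} : StrictAnti (e ∘ g) ↔ StrictAnti g :=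
  ⟨fun h _ _ hab => e.lt_iff_lt.1 (h hab), e.strictMono.comp_strictAnti⟩

def Equiv.subtypeSigmaEquivSigmaSubtype {α : Type*} {β : α → Type*} (p : ∀ a, β a → Prop) :
    {s : Sigma β // p s.1 s.2} ≃ Σ a, {b : β a // p a b} where
  toFun s := ⟨s.1.1, s.1.2, s.2⟩
  invFun s := ⟨⟨s.1, s.2.1⟩, s.2.2⟩

namespace Relation

variable {α : Type*} {R : α → α → Prop} {a b : α}

theorem eqvGen_iff_join_of_rightUnique (hR : Relator.RightUnique R) :
    EqvGen R a b ↔ Join (ReflTransGen R) a b := by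
  have hjoin : Equivalence (Join (ReflTransGen R)) :=
    equivalence_join_reflTransGen fun _ b _ hab hac => ⟨b, .refl, by rw [hR hab hac]⟩
  constructor
  · intro h
    induction h with
    | rel x y hxy => exact ⟨y, .single hxy, .refl⟩
    | refl x => exact hjoin.refl x
    | symm x y _ ih => exact hjoin.symm ih
    | trans x y z _ _ ihxy ihyz => exact hjoin.trans ihxy ihyz
  · rintro ⟨c, hac, hbc⟩
    exact .trans _ _ _ (EqvGen.reflTransGen_le_eqvGen R _ _ hac)
      (.symm _ _ (EqvGen.reflTransGen_le_eqvGen R _ _ hbc))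

theorem Join.reflTransGen_or_of_leftUnique (hR : Relator.LeftUnique R)
    (h : Join (ReflTransGen R) a b) : ReflTransGen R a b ∨ ReflTransGen R b a := by
  obtain ⟨c, hac, hbc⟩ := h
  rcases ReflTransGen.total_of_right_unique (r := Function.swap R) (fun _ _ _ h h' => hR h h')
    (reflTransGen_swap.2 hac) (reflTransGen_swap.2 hbc) with h | h
  · exact .inr (reflTransGen_swap.1 h)
  · exact .inl (reflTransGen_swap.1 h)

theorem ReflTransGen.le_of_forall_rel_le [Preorder α] (hR : ∀ a b, R a b → a ≤ b)
    (h : ReflTransGen R a b) : a ≤ b := by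
  induction h with
  | refl => exact le_rfl
  | tail _ hbc ih => exact ih.trans (hR _ _ hbc)

end Relation

namespace Finpartition

variable {α : Type*} [DecidableEq α] [Fintype α] {P Q : Finpartition (univ : Finset α)} {a b : α}

theorem mem_parts_iff_exists_part_eq {B : Finset α} : B ∈ P.parts ↔ ∃ a, P.part a = B := by
  constructor
  · intro hB
    obtain ⟨a, ha⟩ := P.nonempty_of_mem_parts hB
    exact ⟨a, P.part_eq_of_mem hB ha⟩
  · rintro ⟨a, rfl⟩
    exact P.part_mem.2 (mem_univ a)

theorem eq_of_forall_mem_part_iff (h : ∀ a b, b ∈ P.part a ↔ b ∈ Q.part a) : P = Q := by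
  have hpart : ∀ a, P.part a = Q.part a := fun a => Finset.ext (h a)
  ext B
  simp only [mem_parts_iff_exists_part_eq, hpart]

theorem part_eq_of_mem_part (h : b ∈ P.part a) : P.part b = P.part a :=
  (P.mem_part_iff_part_eq_part (mem_univ b) (mem_univ a)).1 h

theorem mem_part_comm : b ∈ P.part a ↔ a ∈ P.part b :=
  ⟨fun h => part_eq_of_mem_part h ▸ P.mem_part (mem_univ a),
    fun h => part_eq_of_mem_part h ▸ P.mem_part (mem_univ b)⟩

end Finpartition

open Finpartition

section Arcs

variable {m : ℕ} {P : Finpartition (univ : Finset (Fin m))} {a b : Fin m}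

theorem isArc_iff_mem_part :
    IsArc P a b ↔ a < b ∧ b ∈ P.part a ∧ ∀ k ∈ P.part a, a < k → b ≤ k := by
  refine and_congr_right fun _ => ⟨?_, ?_⟩
  · rintro ⟨B, hB, haB, hbB, hmin⟩
    rw [P.part_eq_of_mem hB haB]
    exact ⟨hbB, hmin⟩
  · rintro ⟨hb, hmin⟩
    exact ⟨_, P.part_mem.2 (mem_univ a), P.mem_part (mem_univ a), hb, hmin⟩

theorem IsArc.lt (h : IsArc P a b) : a < b := h.1

theorem isArc_leftUnique : Relator.LeftUnique (IsArc P) := by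
  intro a a' b h h'
  rw [isArc_iff_mem_part] at h h'
  have hpart : P.part a = P.part a' :=
    (part_eq_of_mem_part h.2.1).symm.trans (part_eq_of_mem_part h'.2.1)
  rcases lt_trichotomy a a' with hlt | rfl | hlt
  · exact absurd (h.2.2 a' (hpart ▸ P.mem_part (mem_univ a')) hlt) (not_le.2 h'.1)
  · rfl
  · exact absurd (h'.2.2 a (hpart ▸ P.mem_part (mem_univ a)) hlt) (not_le.2 h.1)

theorem isArc_rightUnique : Relator.RightUnique (IsArc P) := by
  intro a b b' h h'
  rw [isArc_iff_mem_part] at h h'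
  exact le_antisymm (h.2.2 b' h'.2.1 h'.1) (h'.2.2 b h.2.1 h.1)

theorem exists_isArc_le (hab : a < b) (hb : b ∈ P.part a) : ∃ c, IsArc P a c ∧ c ≤ b := by
  classical
  set S := (P.part a).filter (a < ·)
  have hbS : b ∈ S := mem_filter.2 ⟨hb, hab⟩
  have hmin := mem_filter.1 (S.min'_mem ⟨b, hbS⟩)
  exact ⟨S.min' ⟨b, hbS⟩, isArc_iff_mem_part.2 ⟨hmin.2, hmin.1,
    fun k hk hak => S.min'_le k (mem_filter.2 ⟨hk, hak⟩)⟩, S.min'_le b hbS⟩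

theorem reflTransGen_isArc_of_mem_part {a b : Fin m} (hab : a ≤ b) (hb : b ∈ P.part a) :
    ReflTransGen (IsArc P) a b := by
  rcases hab.eq_or_lt with rfl | hlt
  · exact .refl
  obtain ⟨c, hac, hcb⟩ := exists_isArc_le hlt hb
  have hbc : b ∈ P.part c := part_eq_of_mem_part (isArc_iff_mem_part.1 hac).2.1 ▸ hb
  exact .head hac (reflTransGen_isArc_of_mem_part hcb hbc)
termination_by b.1 - a.1
decreasing_by have := hac.lt; omega

theorem eqvGen_isArc_iff_mem_part : EqvGen (IsArc P) a b ↔ b ∈ P.part a := by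
  constructor
  · intro h
    induction h with
    | rel x y hxy => exact (isArc_iff_mem_part.1 hxy).2.1
    | refl x => exact P.mem_part (mem_univ x)
    | symm x y _ ih => exact mem_part_comm.1 ih
    | trans x y z _ _ ihxy ihyz => exact part_eq_of_mem_part ihxy ▸ ihyz
  · intro h
    rcases le_total a b with hab | hba
    · exact EqvGen.reflTransGen_le_eqvGen _ _ _ (reflTransGen_isArc_of_mem_part hab h)
    · exact .symm _ _ (EqvGen.reflTransGen_le_eqvGen _ _ _
        (reflTransGen_isArc_of_mem_part hba (mem_part_comm.1 h)))

theorem mem_blockMax_iff : a ∈ blockMax P ↔ ∀ b, ¬IsArc P a b := by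
  constructor
  · rintro ⟨B, hB, haB, hmax⟩ b hab
    rw [isArc_iff_mem_part, P.part_eq_of_mem hB haB] at hab
    exact (hab.1.trans_le (hmax b hab.2.1)).false
  · refine fun h => ⟨P.part a, P.part_mem.2 (mem_univ a), P.mem_part (mem_univ a),
      fun k hk => not_lt.1 fun hak => ?_⟩
    obtain ⟨c, hac, -⟩ := exists_isArc_le hak hk
    exact h c hac

theorem mem_blockMin_iff : a ∈ blockMin P ↔ ∀ b, ¬IsArc P b a := by
  constructor
  · rintro ⟨B, hB, haB, hmin⟩ b hba
    rw [isArc_iff_mem_part] at hba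
    have hbB : b ∈ B := P.part_eq_of_mem hB haB ▸ mem_part_comm.1 hba.2.1
    exact (hba.1.trans_le (hmin b hbB)).false
  · refine fun h => ⟨P.part a, P.part_mem.2 (mem_univ a), P.mem_part (mem_univ a),
      fun k hk => not_lt.1 fun hka => ?_⟩
    rcases (reflTransGen_isArc_of_mem_part hka.le (mem_part_comm.1 hk)).cases_tail with
      hak | ⟨c, -, hca⟩
    · exact hka.ne' hak
    · exact h c hca

theorem enhIsArc_iff :
    EnhIsArc P a b ↔ IsArc P a b ∨ (a = b ∧ (∀ c, ¬IsArc P c a) ∧ ∀ c, ¬IsArc P a c) := by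
  rw [EnhIsArc, mem_blockMin_iff, mem_blockMax_iff]

theorem isArc_iff_enhIsArc_and_ne : IsArc P a b ↔ EnhIsArc P a b ∧ a ≠ b := by
  refine ⟨fun h => ⟨.inl h, h.lt.ne⟩, ?_⟩
  rintro ⟨h | ⟨rfl, -⟩, hne⟩
  exacts [h, absurd rfl hne]

theorem EnhIsArc.le (h : EnhIsArc P a b) : a ≤ b := by
  rcases h with h | ⟨rfl, -⟩
  exacts [h.lt.le, le_rfl]

theorem enhIsArc_leftUnique : Relator.LeftUnique (EnhIsArc P) := by
  intro a a' b h h'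
  rw [enhIsArc_iff] at h h'
  rcases h with h | ⟨rfl, hin, -⟩ <;> rcases h' with h' | ⟨rfl, hin', -⟩
  exacts [isArc_leftUnique h h', absurd h (hin' a), absurd h' (hin a'), rfl]

theorem enhIsArc_rightUnique : Relator.RightUnique (EnhIsArc P) := by
  intro a b b' h h'
  rw [enhIsArc_iff] at h h'
  rcases h with h | ⟨rfl, -, hout⟩ <;> rcases h' with h' | ⟨rfl, -, hout'⟩
  exacts [isArc_rightUnique h h', absurd h (hout' b), absurd h' (hout b'), rfl]

theorem exists_enhIsArc (P : Finpartition (univ : Finset (Fin m))) (a : Fin m) :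
    (∃ b, EnhIsArc P a b) ∨ ∃ b, EnhIsArc P b a := by
  by_cases hout : ∃ b, IsArc P a b
  · exact .inl (hout.imp fun _ => .inl)
  by_cases hin : ∃ b, IsArc P b a
  · exact .inr (hin.imp fun _ => .inl)
  simp only [not_exists] at hout hin
  exact .inl ⟨a, enhIsArc_iff.2 (.inr ⟨rfl, hin, hout⟩)⟩

end Arcs

section OfArcs

variable {m : ℕ}

noncomputable def partitionOfArcs (R : Fin m → Fin m → Prop) :
    Finpartition (univ : Finset (Fin m)) :=
  @Finpartition.ofSetoid _ _ _ (EqvGen.setoid R) (Classical.decRel _)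

variable {R : Fin m → Fin m → Prop} {a b : Fin m}

theorem mem_part_partitionOfArcs : b ∈ (partitionOfArcs R).part a ↔ EqvGen R a b := by
  classical
  exact Finpartition.mem_part_ofSetoid_iff_rel

theorem partitionOfArcs_isArc (P : Finpartition (univ : Finset (Fin m))) :
    partitionOfArcs (IsArc P) = P :=
  Finpartition.eq_of_forall_mem_part_iff fun _ _ =>
    mem_part_partitionOfArcs.trans eqvGen_isArc_iff_mem_part

theorem eq_of_isArc_iff {P Q : Finpartition (univ : Finset (Fin m))}
    (h : ∀ a b, IsArc P a b ↔ IsArc Q a b) : P = Q := by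
  have hPQ : IsArc P = IsArc Q := funext₂ fun a b => propext (h a b)
  rw [← partitionOfArcs_isArc P, hPQ, partitionOfArcs_isArc]

theorem isArc_partitionOfArcs_iff (hlt : ∀ a b, R a b → a < b) (hl : Relator.LeftUnique R)
    (hr : Relator.RightUnique R) : IsArc (partitionOfArcs R) a b ↔ R a b := by
  have hle : ∀ {a b}, ReflTransGen R a b → a ≤ b :=
    fun h => h.le_of_forall_rel_le fun _ _ h => (hlt _ _ h).le
  -- A class of `EqvGen R` is a `Join` class by right uniqueness, hence a chain by left uniqueness.
  have hchain : ∀ {a b}, EqvGen R a b → a < b → ∃ c, R a c ∧ ReflTransGen R c b := by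
    intro a b h hab
    rcases ((eqvGen_iff_join_of_rightUnique hr).1 h).reflTransGen_or_of_leftUnique hl with
      h | h
    · exact h.cases_head.resolve_left hab.ne
    · exact absurd (hle h) (not_le.2 hab)
  simp only [isArc_iff_mem_part, mem_part_partitionOfArcs]
  constructor
  · rintro ⟨hab, hb, hmin⟩
    obtain ⟨c, hac, hcb⟩ := hchain hb hab
    rwa [le_antisymm (hle hcb) (hmin c (.rel _ _ hac) (hlt _ _ hac))] at hac
  · intro hab
    refine ⟨hlt _ _ hab, .rel _ _ hab, fun k hk hak => ?_⟩
    obtain ⟨c, hac, hck⟩ := hchain hk hak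
    rw [hr hab hac]
    exact hle hck

theorem enhIsArc_partitionOfArcs_iff {W : Fin m → Fin m → Prop} (hle : ∀ a b, W a b → a ≤ b)
    (hl : Relator.LeftUnique W) (hr : Relator.RightUnique W)
    (hcover : ∀ a, (∃ b, W a b) ∨ ∃ b, W b a) :
    EnhIsArc (partitionOfArcs fun a b => W a b ∧ a ≠ b) a b ↔ W a b := by
  have harc : ∀ a b, IsArc (partitionOfArcs fun a b => W a b ∧ a ≠ b) a b ↔ W a b ∧ a ≠ b :=
    fun _ _ => isArc_partitionOfArcs_iff (fun a b h => (hle a b h.1).lt_of_ne h.2)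
      (fun _ _ _ h h' => hl h.1 h'.1) (fun _ _ _ h h' => hr h.1 h'.1)
  simp only [enhIsArc_iff, harc]
  constructor
  · rintro (h | ⟨rfl, hin, hout⟩)
    · exact h.1
    rcases hcover a with ⟨b, hab⟩ | ⟨b, hba⟩
    · obtain rfl : b = a := not_not.1 fun hne => hout b ⟨hab, Ne.symm hne⟩
      exact hab
    · obtain rfl : b = a := not_not.1 fun hne => hin b ⟨hba, hne⟩
      exact hba
  · intro hab
    by_cases hne : a = b
    · subst hne
      exact .inr ⟨rfl, fun c hc => hc.2 (hl hc.1 hab), fun c hc => hc.2 (hr hab hc.1)⟩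
    · exact .inl ⟨hab, hne⟩

end OfArcs

section Shift

variable {n : ℕ}

noncomputable def arcEnds (P : Finpartition (univ : Finset (Fin (n + 1)))) : Finset (Fin n) :=
  open Classical in {v | (∃ b, IsArc P v.castSucc b) ∨ ∃ a, IsArc P a v.succ}

theorem mem_arcEnds {P : Finpartition (univ : Finset (Fin (n + 1)))} {v : Fin n} :
    v ∈ arcEnds P ↔ (∃ b, IsArc P v.castSucc b) ∨ ∃ a, IsArc P a v.succ := by
  simp [arcEnds]

variable (V : Finset (Fin n))

noncomputable def arcStart : Fin V.card ↪o Fin (n + 1) :=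
  (V.orderEmbOfFin rfl).trans Fin.castSuccOrderEmb

noncomputable def arcEnd : Fin V.card ↪o Fin (n + 1) :=
  (V.orderEmbOfFin rfl).trans (Fin.succOrderEmb n)

variable {V}

theorem arcStart_lt_arcEnd_iff {x y : Fin V.card} : arcStart V x < arcEnd V y ↔ x ≤ y := by
  simp [arcStart, arcEnd, Fin.castSucc_lt_succ_iff]

theorem exists_orderEmbOfFin_eq {v : Fin n} (hv : v ∈ V) : ∃ x, V.orderEmbOfFin rfl x = v := by
  rwa [← Set.mem_range, range_orderEmbOfFin]

variable {P : Finpartition (univ : Finset (Fin (n + 1)))}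

theorem exists_eq_arcStart_arcEnd (hV : arcEnds P = V) {a b : Fin (n + 1)} (h : IsArc P a b) :
    ∃ x y, arcStart V x = a ∧ arcEnd V y = b := by
  obtain ⟨a, rfl⟩ := Fin.exists_castSucc_eq.2 (h.lt.trans_le (Fin.le_last b)).ne
  obtain ⟨b, rfl⟩ := Fin.exists_succ_eq.2 (ne_bot_of_gt h.lt)
  have ha : a ∈ V := hV ▸ mem_arcEnds.2 (.inl ⟨_, h⟩)
  have hb : b ∈ V := hV ▸ mem_arcEnds.2 (.inr ⟨_, h⟩)
  obtain ⟨x, rfl⟩ := exists_orderEmbOfFin_eq ha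
  obtain ⟨y, rfl⟩ := exists_orderEmbOfFin_eq hb
  exact ⟨x, y, rfl, rfl⟩

theorem isArc_iff_map (hV : arcEnds P = V) {a b : Fin (n + 1)} :
    IsArc P a b ↔ Relation.Map (fun x y => IsArc P (arcStart V x) (arcEnd V y))
      (arcStart V) (arcEnd V) a b := by
  refine ⟨fun h => ?_, fun ⟨x, y, h, hx, hy⟩ => hx ▸ hy ▸ h⟩
  obtain ⟨x, y, rfl, rfl⟩ := exists_eq_arcStart_arcEnd hV h
  exact ⟨x, y, h, rfl, rfl⟩

variable (V) in
noncomputable def shrink (P : Finpartition (univ : Finset (Fin (n + 1)))) :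
    Finpartition (univ : Finset (Fin V.card)) :=
  partitionOfArcs fun x y => IsArc P (arcStart V x) (arcEnd V y) ∧ x ≠ y

theorem enhIsArc_shrink_iff (hV : arcEnds P = V) {x y : Fin V.card} :
    EnhIsArc (shrink V P) x y ↔ IsArc P (arcStart V x) (arcEnd V y) := by
  refine enhIsArc_partitionOfArcs_iff (fun x y h => arcStart_lt_arcEnd_iff.1 h.lt)
    (fun _ _ _ h h' => (arcStart V).injective (isArc_leftUnique h h'))
    (fun _ _ _ h h' => (arcEnd V).injective (isArc_rightUnique h h')) fun x => ?_
  rcases mem_arcEnds.1 (hV.symm.subset (V.orderEmbOfFin_mem rfl x)) with ⟨b, hb⟩ | ⟨a, ha⟩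
  · obtain ⟨x', y, hx', rfl⟩ := exists_eq_arcStart_arcEnd hV hb
    obtain rfl : x' = x := (arcStart V).injective hx'
    exact .inl ⟨y, hb⟩
  · obtain ⟨x', y', rfl, hy'⟩ := exists_eq_arcStart_arcEnd hV ha
    obtain rfl : y' = x := (arcEnd V).injective hy'
    exact .inr ⟨x', ha⟩

variable (V) in
noncomputable def expand (Q : Finpartition (univ : Finset (Fin V.card))) :
    Finpartition (univ : Finset (Fin (n + 1))) :=
  partitionOfArcs (Relation.Map (EnhIsArc Q) (arcStart V) (arcEnd V))

variable {Q : Finpartition (univ : Finset (Fin V.card))}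

theorem isArc_expand_iff {a b : Fin (n + 1)} :
    IsArc (expand V Q) a b ↔ Relation.Map (EnhIsArc Q) (arcStart V) (arcEnd V) a b := by
  refine isArc_partitionOfArcs_iff ?_ ?_ ?_
  · rintro _ _ ⟨x, y, h, rfl, rfl⟩
    exact arcStart_lt_arcEnd_iff.2 h.le
  · rintro _ _ _ ⟨x, y, h, rfl, rfl⟩ ⟨x', y', h', rfl, hy⟩
    rw [(arcEnd V).injective hy] at h'
    rw [enhIsArc_leftUnique h h']
  · rintro _ _ _ ⟨x, y, h, rfl, rfl⟩ ⟨x', y', h', hx, rfl⟩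
    rw [(arcStart V).injective hx] at h'
    rw [enhIsArc_rightUnique h h']

theorem isArc_expand_arcStart_arcEnd {x y : Fin V.card} :
    IsArc (expand V Q) (arcStart V x) (arcEnd V y) ↔ EnhIsArc Q x y :=
  isArc_expand_iff.trans (map_apply_apply (arcStart V).injective (arcEnd V).injective _ _ _)

theorem arcEnds_expand : arcEnds (expand V Q) = V := by
  ext v
  simp only [mem_arcEnds, isArc_expand_iff]
  constructor
  · rintro (⟨_, x, _, -, hx, -⟩ | ⟨_, _, y, -, -, hy⟩)
    · exact Fin.castSucc_injective _ hx ▸ V.orderEmbOfFin_mem rfl x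
    · exact Fin.succ_injective _ hy ▸ V.orderEmbOfFin_mem rfl y
  · intro hv
    obtain ⟨x, rfl⟩ := exists_orderEmbOfFin_eq hv
    rcases exists_enhIsArc Q x with ⟨y, hy⟩ | ⟨y, hy⟩
    · exact .inl ⟨_, x, y, hy, rfl, rfl⟩
    · exact .inr ⟨_, y, x, hy, rfl, rfl⟩

theorem shrink_expand : shrink V (expand V Q) = Q :=
  eq_of_isArc_iff fun x y => by
    rw [isArc_iff_enhIsArc_and_ne, isArc_iff_enhIsArc_and_ne, enhIsArc_shrink_iff arcEnds_expand,
      isArc_expand_arcStart_arcEnd]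

theorem expand_shrink (hV : arcEnds P = V) : expand V (shrink V P) = P := by
  have hQ : EnhIsArc (shrink V P) = fun x y => IsArc P (arcStart V x) (arcEnd V y) :=
    funext₂ fun _ _ => propext (enhIsArc_shrink_iff hV)
  exact eq_of_isArc_iff fun a b => by rw [isArc_expand_iff, hQ, isArc_iff_map hV]

end Shift

section Colored

variable {m n r : ℕ}

theorem ColoredPartition.ext {Λ₁ Λ₂ : ColoredPartition m r} (hP : Λ₁.P = Λ₂.P)
    (hc : ∀ a b h₁ h₂, Λ₁.color a b h₁ = Λ₂.color a b h₂) : Λ₁ = Λ₂ := by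
  obtain ⟨P, c₁⟩ := Λ₁
  obtain ⟨_, c₂⟩ := Λ₂
  subst hP
  obtain rfl : c₁ = c₂ := funext fun a => funext fun b => funext fun h => hc a b h h
  rfl

theorem EnhColoredPartition.ext {Γ₁ Γ₂ : EnhColoredPartition m r} (hP : Γ₁.P = Γ₂.P)
    (hc : ∀ a b h₁ h₂, Γ₁.color a b h₁ = Γ₂.color a b h₂) : Γ₁ = Γ₂ := by
  obtain ⟨P, c₁⟩ := Γ₁
  obtain ⟨_, c₂⟩ := Γ₂
  subst hP
  obtain rfl : c₁ = c₂ := funext fun a => funext fun b => funext fun h => hc a b h h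
  rfl

theorem EnhColoredPartition.color_congr (Γ : EnhColoredPartition m r) {a a' b b' : Fin m}
    (ha : a = a') (hb : b = b') (h : EnhIsArc Γ.P a b) (h' : EnhIsArc Γ.P a' b') :
    Γ.color a b h = Γ.color a' b' h' := by
  subst ha hb
  rfl

instance : Finite (EnhColoredPartition m r) :=
  Finite.of_equiv (Σ P : Finpartition (univ : Finset (Fin m)), ∀ a b, EnhIsArc P a b → Fin r)
    { toFun := fun s => ⟨s.1, s.2⟩
      invFun := fun Γ => ⟨Γ.P, Γ.color⟩ }

variable (V : Finset (Fin n))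

noncomputable def expandColored (Γ : EnhColoredPartition V.card r) :
    ColoredPartition (n + 1) r where
  P := expand V Γ.P
  color _ _ h :=
    let hab := isArc_expand_iff.1 h
    Γ.color hab.choose hab.choose_spec.choose hab.choose_spec.choose_spec.1

noncomputable def shrinkColored (Λ : ColoredPartition (n + 1) r) (hV : arcEnds Λ.P = V) :
    EnhColoredPartition V.card r where
  P := shrink V Λ.P
  color _ _ h := Λ.color _ _ ((enhIsArc_shrink_iff hV).1 h)

variable {V}

theorem expandColored_color (Γ : EnhColoredPartition V.card r) {x y : Fin V.card}
    (h : IsArc (expandColored V Γ).P (arcStart V x) (arcEnd V y)) (h' : EnhIsArc Γ.P x y) :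
    (expandColored V Γ).color (arcStart V x) (arcEnd V y) h = Γ.color x y h' :=
  let hxy := isArc_expand_iff.1 h
  Γ.color_congr ((arcStart V).injective hxy.choose_spec.choose_spec.2.1)
    ((arcEnd V).injective hxy.choose_spec.choose_spec.2.2) _ h'

variable (V r) in
noncomputable def coloredFiberEquiv :
    EnhColoredPartition V.card r ≃ {Λ : ColoredPartition (n + 1) r // arcEnds Λ.P = V} where
  toFun Γ := ⟨expandColored V Γ, arcEnds_expand⟩
  invFun Λ := shrinkColored V Λ.1 Λ.2
  left_inv Γ := EnhColoredPartition.ext shrink_expand fun _ _ _ h =>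
    expandColored_color Γ (isArc_expand_arcStart_arcEnd.2 h) h
  right_inv Λ := Subtype.ext <| ColoredPartition.ext (expand_shrink Λ.2) fun a b h h' => by
    obtain ⟨x, y, -, rfl, rfl⟩ := isArc_expand_iff.1 h
    exact expandColored_color _ h ((enhIsArc_shrink_iff Λ.2).2 h')

variable (n r) in
noncomputable def coloredPartitionEquivSigma :
    (Σ V : Finset (Fin n), EnhColoredPartition V.card r) ≃ ColoredPartition (n + 1) r :=
  (Equiv.sigmaCongrRight (coloredFiberEquiv r)).trans
    (Equiv.sigmaFiberEquiv fun Λ : ColoredPartition (n + 1) r => arcEnds Λ.P)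

theorem coloredPartitionEquivSigma_apply (Γ : EnhColoredPartition V.card r) :
    coloredPartitionEquivSigma n r ⟨V, Γ⟩ = expandColored V Γ :=
  rfl

/-- `M` and `M'` are the monotonicity condition on the right ends: increasing for crossings,
decreasing for nestings. -/
theorem exists_sameColor_arcs_expandColored_iff (Γ : EnhColoredPartition V.card r) {k : ℕ}
    {M : (Fin k → Fin (n + 1)) → Prop} {M' : (Fin k → Fin V.card) → Prop}
    (hM : ∀ g, M (arcEnd V ∘ g) ↔ M' g) :
    (∃ (f g : Fin k → Fin (n + 1)) (c : Fin r), StrictMono f ∧ M g ∧ (∀ s t, f s < g t) ∧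
        ∀ t, ∃ h : IsArc (expandColored V Γ).P (f t) (g t), (expandColored V Γ).color _ _ h = c) ↔
      ∃ (f g : Fin k → Fin V.card) (c : Fin r), StrictMono f ∧ M' g ∧ (∀ s t, f s ≤ g t) ∧
        ∀ t, ∃ h : EnhIsArc Γ.P (f t) (g t), Γ.color _ _ h = c := by
  constructor
  · rintro ⟨f, g, c, hf, hg, hfg, harc⟩
    choose x y hxy hx hy using fun t => isArc_expand_iff.1 (harc t).1
    obtain rfl : f = arcStart V ∘ x := funext fun t => (hx t).symm
    obtain rfl : g = arcEnd V ∘ y := funext fun t => (hy t).symm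
    refine ⟨x, y, c, (arcStart V).strictMono_comp_iff.1 hf, (hM y).1 hg,
      fun s t => arcStart_lt_arcEnd_iff.1 (hfg s t), fun t => ⟨hxy t, ?_⟩⟩
    obtain ⟨h, hc⟩ := harc t
    exact (expandColored_color Γ h (hxy t)).symm.trans hc
  · rintro ⟨x, y, c, hx, hy, hxy, harc⟩
    refine ⟨arcStart V ∘ x, arcEnd V ∘ y, c, (arcStart V).strictMono_comp_iff.2 hx, (hM y).2 hy,
      fun s t => arcStart_lt_arcEnd_iff.2 (hxy s t), fun t => ?_⟩
    obtain ⟨h, hc⟩ := harc t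
    exact ⟨isArc_expand_arcStart_arcEnd.2 h, (expandColored_color Γ _ h).trans hc⟩

theorem hasCrossing_expandColored_iff (Γ : EnhColoredPartition V.card r) (k : ℕ) :
    HasCrossing (expandColored V Γ) k ↔ HasEnhCrossing Γ k :=
  exists_sameColor_arcs_expandColored_iff Γ fun _ => (arcEnd V).strictMono_comp_iff

theorem hasNesting_expandColored_iff (Γ : EnhColoredPartition V.card r) (k : ℕ) :
    HasNesting (expandColored V Γ) k ↔ HasEnhNesting Γ k :=
  exists_sameColor_arcs_expandColored_iff Γ fun _ => (arcEnd V).strictAnti_comp_iff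

end Colored

theorem stmt15_general (j k r n : ℕ) :
    NCNcount (n + 1) r j k =
      ∑ i ∈ Finset.range (n + 1), Nat.choose n i * ENCNcount i r j k := by
  calc NCNcount (n + 1) r j k
      = Nat.card {s : Σ V : Finset (Fin n), EnhColoredPartition V.card r //
          ¬HasEnhCrossing s.2 j ∧ ¬HasEnhNesting s.2 k} :=
        (Nat.card_congr ((coloredPartitionEquivSigma n r).subtypeEquiv fun ⟨V, Γ⟩ => by
          rw [coloredPartitionEquivSigma_apply, hasCrossing_expandColored_iff,
            hasNesting_expandColored_iff])).symm
    _ = ∑ V : Finset (Fin n), ENCNcount V.card r j k :=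
      (Nat.card_congr (Equiv.subtypeSigmaEquivSigmaSubtype fun _ Γ =>
        ¬HasEnhCrossing Γ j ∧ ¬HasEnhNesting Γ k)).trans Nat.card_sigma
    _ = ∑ i ∈ range (n + 1), n.choose i * ENCNcount i r j k := by
      rw [← powerset_univ, sum_powerset_apply_card (fun i => ENCNcount i r j k), card_univ,
        Fintype.card_fin]
      simp only [smul_eq_mul]

/-- `NCN_{j,k}(n+1, r) = Σ_{i=0}^n C(n,i) · ENCN_{j,k}(i, r)`. -/
theorem stmt15 (j k r n : ℕ) (hj : 0 < j) (hk : 0 < k) (hr : 0 < r) :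
    NCNcount (n + 1) r j k =
      ∑ i ∈ Finset.range (n + 1), Nat.choose n i * ENCNcount i r j k :=
  stmt15_general j k r n
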